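/- arXiv:2605.00380 — 2 statements merged into one kernel-verified Lean document; each statement's English description precedes it below -/
import Mathlib

section
/- If additionally e(x⁺) ≤ ε₊, then |⟨x⁻, x⁺⟩| ≤ ‖P_S x⁺‖ · √(‖x⁻‖² − d·e(x⁻)) + ‖x⁻‖ · √(d·ε₊). -/
open scoped RealInnerProductSpace

/-- If additionally `e(x⁺) ≤ ε₊`, then
`|⟨x⁻,x⁺⟩| ≤ ‖P_S x⁺‖ √(‖x⁻‖² − d e(x⁻)) + ‖x⁻‖ √(d ε₊)`. -/
theorem stmt10 {d : ℕ} (hd : 0 < d) (S : Submodule ℝ (EuclideanSpace ℝ (Fin d)))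
    (xm xp : EuclideanSpace ℝ (Fin d)) (εp : ℝ) (hεp : 0 ≤ εp)
    (e : EuclideanSpace ℝ (Fin d) → ℝ)
    (he : ∀ y, e y = (1 / (d : ℝ)) *
      ‖y - (S.orthogonalProjection y : EuclideanSpace ℝ (Fin d))‖ ^ 2)
    (hcap : e xp ≤ εp) :
    |⟪xm, xp⟫| ≤
      ‖(S.orthogonalProjection xp : EuclideanSpace ℝ (Fin d))‖ *
          Real.sqrt (‖xm‖ ^ 2 - d * e xm)
        + ‖xm‖ * Real.sqrt (d * εp) := by
  have hd' : (d : ℝ) ≠ 0 := Nat.cast_ne_zero.mpr hd.ne'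
  have hdpos : (0:ℝ) < d := Nat.cast_pos.mpr hd
  set p : EuclideanSpace ℝ (Fin d) := (S.orthogonalProjection xm : EuclideanSpace ℝ (Fin d)) with hp
  set q : EuclideanSpace ℝ (Fin d) := xm - p with hq
  set p' : EuclideanSpace ℝ (Fin d) := (S.orthogonalProjection xp : EuclideanSpace ℝ (Fin d)) with hp'
  set q' : EuclideanSpace ℝ (Fin d) := xp - p' with hq'
  have hpm : p ∈ S := (S.orthogonalProjection xm).2
  have hpm' : p' ∈ S := (S.orthogonalProjection xp).2
  have hqm : q ∈ Sᗮ := S.sub_starProjection_mem_orthogonal xm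
  have hqm' : q' ∈ Sᗮ := S.sub_starProjection_mem_orthogonal xp
  have hpq : ⟪p, q⟫ = 0 := hqm p hpm
  have hpq' : ⟪p, q'⟫ = 0 := hqm' p hpm
  have hqp' : ⟪q, p'⟫ = 0 := (real_inner_comm q p') ▸ hqm p' hpm'
  have hxm : xm = p + q := by simp [hq]
  have hxp : xp = p' + q' := by simp [hq']
  have hnm : ‖xm‖ ^ 2 = ‖p‖ ^ 2 + ‖q‖ ^ 2 := by
    rw [hxm, norm_add_sq_real, hpq]; ring
  have hp'q' : ⟪p', q'⟫ = 0 := hqm' p' hpm'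
  have hnp : ‖xp‖ ^ 2 = ‖p'‖ ^ 2 + ‖q'‖ ^ 2 := by
    rw [hxp, norm_add_sq_real, hp'q']; ring
  have hdem : (d : ℝ) * e xm = ‖q‖ ^ 2 := by
    rw [he xm]; field_simp; rfl
  have hdep : (d : ℝ) * e xp = ‖q'‖ ^ 2 := by
    rw [he xp]; field_simp; rfl
  have hinner : ⟪xm, xp⟫ = ⟪p, p'⟫ + ⟪q, q'⟫ := by
    rw [hxm, hxp]
    simp [inner_add_left, inner_add_right, hpq', hqp']
  have habs : |⟪xm, xp⟫| ≤ ‖p‖ * ‖p'‖ + ‖q‖ * ‖q'‖ := by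
    rw [hinner]
    calc |⟪p, p'⟫ + ⟪q, q'⟫| ≤ |⟪p, p'⟫| + |⟪q, q'⟫| := abs_add_le _ _
      _ ≤ ‖p‖ * ‖p'‖ + ‖q‖ * ‖q'‖ :=
        add_le_add (abs_real_inner_le_norm _ _) (abs_real_inner_le_norm _ _)
  have hsqrt1 : Real.sqrt (‖xm‖ ^ 2 - d * e xm) = ‖p‖ := by
    rw [hnm, hdem]; ring_nf
    rw [Real.sqrt_sq (norm_nonneg _)]
  have hq'le : ‖q'‖ ≤ Real.sqrt ((d : ℝ) * εp) := by
    have : ‖q'‖ ^ 2 ≤ (d : ℝ) * εp := by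
      rw [← hdep]; exact mul_le_mul_of_nonneg_left hcap hdpos.le
    have h3 := Real.sqrt_le_sqrt this
    rwa [Real.sqrt_sq (norm_nonneg q')] at h3
  have hqle : ‖q‖ ≤ ‖xm‖ := by
    have h2 : ‖q‖ ^ 2 ≤ ‖xm‖ ^ 2 := by nlinarith [norm_nonneg p]
    have h3 := Real.sqrt_le_sqrt h2
    rwa [Real.sqrt_sq (norm_nonneg q), Real.sqrt_sq (norm_nonneg xm)] at h3
  calc |⟪xm, xp⟫| ≤ ‖p‖ * ‖p'‖ + ‖q‖ * ‖q'‖ := habs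
    _ ≤ ‖p'‖ * Real.sqrt (‖xm‖ ^ 2 - d * e xm) + ‖xm‖ * Real.sqrt ((d:ℝ) * εp) := by
        rw [hsqrt1]
        exact add_le_add (le_of_eq (mul_comm _ _))
          (mul_le_mul hqle hq'le (norm_nonneg _) (norm_nonneg _))
end

section
/- Combined interference bound: for scalars ω, λ, A⁻, A⁺ ≥ 0 and vectors δ⁻, δ⁺ ∈ ℝ^{|V|}, x⁻, x⁺ ∈ ℝ^d, the Frobenius inner product of the scaled rank-one gradients g̃⁻ = ω A⁻ δ⁻ (x⁻)ᵀ and g̃⁺ = λ A⁺ δ⁺ (x⁺)ᵀ satisfies |⟨g̃⁻, g̃⁺⟩_F| ≤ ω λ A⁻ A⁺ |⟨δ⁻, δ⁺⟩| (‖P_S x⁺‖√(‖x⁻‖² − d·e(x⁻)) + ‖x⁻‖√(d·e(x⁺))). -/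
/-- Combined interference bound. For nonnegative scalars
`ω, λ, A⁻, A⁺`, scaled rank-one gradients `g̃⁻ = ω A⁻ δ⁻ (x⁻)ᵀ` and
`g̃⁺ = λ A⁺ δ⁺ (x⁺)ᵀ` satisfy
`|⟨g̃⁻, g̃⁺⟩_F| ≤ ω λ A⁻ A⁺ |⟨δ⁻,δ⁺⟩| (‖P_S x⁺‖√(‖x⁻‖² − d e(x⁻)) + ‖x⁻‖√(d e(x⁺)))`,
where `e(x) = (1/d)‖(I−P_S)x‖²`. -/
theorem stmt18 {Vn d : ℕ} (hd : 0 < d)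
    (S : Submodule ℝ (EuclideanSpace ℝ (Fin d)))
    (ω lam Am Ap : ℝ) (hω : 0 ≤ ω) (hlam : 0 ≤ lam) (hAm : 0 ≤ Am) (hAp : 0 ≤ Ap)
    (δm δp : Fin Vn → ℝ) (xm xp : EuclideanSpace ℝ (Fin d))
    (e : EuclideanSpace ℝ (Fin d) → ℝ)
    (he : ∀ y, e y = (1 / (d : ℝ)) *
      ‖y - (Submodule.orthogonalProjectionOnto S y : EuclideanSpace ℝ (Fin d))‖ ^ 2)
    (gm gp : Matrix (Fin Vn) (Fin d) ℝ)
    (hgm : ∀ a b, gm a b = ω * Am * δm a * xm b)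
    (hgp : ∀ a b, gp a b = lam * Ap * δp a * xp b) :
    |∑ a, ∑ b, gm a b * gp a b| ≤
      ω * lam * Am * Ap * |∑ u, δm u * δp u| *
        (‖(Submodule.orthogonalProjectionOnto S xp : EuclideanSpace ℝ (Fin d))‖ *
            Real.sqrt (‖xm‖ ^ 2 - d * e xm)
          + ‖xm‖ * Real.sqrt (d * e xp)) := by
  set v : EuclideanSpace ℝ (Fin d) := (Submodule.orthogonalProjectionOnto S xm : EuclideanSpace ℝ (Fin d)) with hv
  set w : EuclideanSpace ℝ (Fin d) := (Submodule.orthogonalProjectionOnto S xp : EuclideanSpace ℝ (Fin d)) with hw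
  have hdne : (d : ℝ) ≠ 0 := Nat.cast_ne_zero.mpr hd.ne'
  have hde : ∀ y : EuclideanSpace ℝ (Fin d),
      (d : ℝ) * e y = ‖y - (Submodule.orthogonalProjectionOnto S y : EuclideanSpace ℝ (Fin d))‖ ^ 2 := by
    intro y
    rw [he y]
    field_simp
  -- factor the double sum
  have h1 : ∑ a, ∑ b, gm a b * gp a b =
      ω * lam * Am * Ap * ((∑ u, δm u * δp u) * (∑ b, xm b * xp b)) := by
    rw [Finset.sum_mul_sum, Finset.mul_sum]
    refine Finset.sum_congr rfl fun a _ => ?_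
    rw [Finset.mul_sum]
    refine Finset.sum_congr rfl fun b _ => ?_
    rw [hgm, hgp]; ring
  -- inner product
  have hip : (∑ b, xm b * xp b) = inner ℝ xm xp := by
    rw [PiLp.inner_apply]
    simp [mul_comm]
  -- orthogonality facts
  have hmS : xm - v ∈ Sᗮ := S.sub_starProjection_mem_orthogonal xm
  have hpS : xp - w ∈ Sᗮ := S.sub_starProjection_mem_orthogonal xp
  have hvS : v ∈ S := (Submodule.orthogonalProjectionOnto S xm).2
  have hwS : w ∈ S := (Submodule.orthogonalProjectionOnto S xp).2
  have hdecomp : (inner ℝ xm xp : ℝ) = inner ℝ v w + inner ℝ (xm - v) (xp - w) := by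
    have e1 : xm = v + (xm - v) := by abel
    have e2 : xp = w + (xp - w) := by abel
    have o1 : (inner ℝ v (xp - w) : ℝ) = 0 := (Submodule.mem_orthogonal S _).1 hpS v hvS
    have o2 : (inner ℝ (xm - v) w : ℝ) = 0 := by
      have := (Submodule.mem_orthogonal S _).1 hmS w hwS
      rwa [real_inner_comm] at this
    calc (inner ℝ xm xp : ℝ) = inner ℝ (v + (xm - v)) (w + (xp - w)) := by rw [← e1, ← e2]
      _ = inner ℝ v w + inner ℝ (xm - v) (xp - w) := by
          simp only [inner_add_left, inner_add_right, o1, o2]; ring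
  -- pythagoras
  have hpy : ∀ y : EuclideanSpace ℝ (Fin d),
      ‖y‖ ^ 2 = ‖(Submodule.orthogonalProjectionOnto S y : EuclideanSpace ℝ (Fin d))‖ ^ 2 +
        ‖y - (Submodule.orthogonalProjectionOnto S y : EuclideanSpace ℝ (Fin d))‖ ^ 2 := by
    intro y
    have o : (inner ℝ ((Submodule.orthogonalProjectionOnto S y : EuclideanSpace ℝ (Fin d)))
        (y - Submodule.orthogonalProjectionOnto S y) : ℝ) = 0 :=
      (Submodule.mem_orthogonal S _).1 (S.sub_starProjection_mem_orthogonal y) _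
        (Submodule.orthogonalProjectionOnto S y).2
    have := norm_add_sq_real ((Submodule.orthogonalProjectionOnto S y : EuclideanSpace ℝ (Fin d)))
        (y - Submodule.orthogonalProjectionOnto S y)
    rw [o] at this
    simpa using this
  have hsm : Real.sqrt (‖xm‖ ^ 2 - d * e xm) = ‖v‖ := by
    rw [hde xm, hpy xm]
    simp [← hv, Real.sqrt_sq (norm_nonneg v)]
  have hsp : Real.sqrt ((d : ℝ) * e xp) = ‖xp - w‖ := by
    rw [hde xp, Real.sqrt_sq (norm_nonneg _)]
  have hmle : ‖xm - v‖ ≤ ‖xm‖ := by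
    have h := hpy xm
    nlinarith [norm_nonneg (xm - v), norm_nonneg xm, sq_nonneg ‖v‖]
  -- main inner bound
  have hinner : |(inner ℝ xm xp : ℝ)| ≤ ‖w‖ * ‖v‖ + ‖xm‖ * ‖xp - w‖ := by
    rw [hdecomp]
    calc |(inner ℝ v w : ℝ) + inner ℝ (xm - v) (xp - w)|
        ≤ |(inner ℝ v w : ℝ)| + |(inner ℝ (xm - v) (xp - w) : ℝ)| := abs_add_le _ _
      _ ≤ ‖v‖ * ‖w‖ + ‖xm - v‖ * ‖xp - w‖ := by
          gcongr <;> exact abs_real_inner_le_norm _ _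
      _ ≤ ‖w‖ * ‖v‖ + ‖xm‖ * ‖xp - w‖ := by
          rw [mul_comm ‖v‖]
          gcongr
  -- assemble
  have hC : 0 ≤ ω * lam * Am * Ap := by positivity
  rw [h1, hsm, hsp, abs_mul, abs_of_nonneg hC, abs_mul, hip, ← mul_assoc]
  exact mul_le_mul_of_nonneg_left hinner (by positivity)
end
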